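/- Let {S(t) : t ≥ 0} be a semigroup on a nonempty subset V of a normed space X, T > 0, and let B be a bounded subset of V. If the semigroup satisfies the smoothing property on B at time T with parameters (η,κ), then it is quasi-stable on B at time T with parameters (η,κ): in case (i) with respect to the compact seminorm z ↦ ‖z‖_X on Z, and in case (ii) with respect to the compact seminorm x ↦ ‖x‖_Y on X. Moreover, if S(T)B ⊆ B, then for any σ ∈ (0,1−η) the covering condition N^V(S(kT)B, a·q^k) ≤ b·h^k (for some a,b > 0, k₀ ∈ ℕ and all integers k ≥ k₀) holds with q = η+σ and h = m_{‖·‖_X}(B̄^Z(0,1), σ/(2κ)) in case (i), and h = m_{‖·‖_Y}(B̄^X(0,1), σ/(2κ)) in case (ii). -/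

import Mathlib

open Filter Metric Set Topology Bornology
open scoped ENNReal

section GenericDefs

variable {W : Type*} [MetricSpace W]

/-- One-sided Hausdorff distance `dist(G,A) = sup_{x∈G} inf_{y∈A} d(x,y)` (in `ℝ≥0∞`). -/
noncomputable def attrDist (G A : Set W) : ℝ≥0∞ :=
  ⨆ x ∈ G, EMetric.infEdist x A

/-- `N(G,ε)`: minimal number of open `ε`-balls centered in `G` needed to cover `G`. -/
noncomputable def coverN (G : Set W) (ε : ℝ) : ℝ≥0∞ :=
  ⨅ (F : Finset W) (_ : ↑F ⊆ G) (_ : G ⊆ ⋃ x ∈ F, ball x ε), (F.card : ℝ≥0∞)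

open Classical in
/-- Fractal (box-counting) dimension `limsup_{ε→0⁺} log N(M,ε) / log (1/ε)`. -/
noncomputable def fracDim (M : Set W) : ℝ≥0∞ :=
  limsup (fun ε : ℝ =>
    if coverN M ε = ⊤ then (⊤ : ℝ≥0∞)
    else ENNReal.ofReal (Real.log (coverN M ε).toReal / Real.log (1 / ε))) (𝓝[>] (0 : ℝ))

/-- `m_ρ(F,ε)`: the maximal cardinality of an `ε`-distinguishable (w.r.t. `ρ`) subset of `F`. -/
noncomputable def maxDisting {α : Type*} (ρ : α → α → ℝ) (F : Set α) (ε : ℝ) : ℝ≥0∞ :=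
  ⨆ (U : Finset α) (_ : ↑U ⊆ F) (_ : ∀ x ∈ U, ∀ y ∈ U, x ≠ y → ε ≤ ρ x y),
    (U.card : ℝ≥0∞)

end GenericDefs

section OnDefs

variable {X : Type*} [NormedAddCommGroup X]

/-- A semigroup (semiflow) of maps on the subset `V` of `X`. -/
def IsSemiflowOn (V : Set X) (S : ℝ → X → X) : Prop :=
  (∀ x ∈ V, S 0 x = x) ∧ (∀ t : ℝ, 0 ≤ t → ∀ x ∈ V, S t x ∈ V) ∧
    (∀ t s : ℝ, 0 ≤ t → 0 ≤ s → ∀ x ∈ V, S t (S s x) = S (t + s) x)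

/-- The set `A` attracts all bounded subsets of `V`. -/
def AttractsSetOn (V : Set X) (S : ℝ → X → X) (A : Set X) : Prop :=
  ∀ G : Set X, G ⊆ V → IsBounded G →
    Tendsto (fun t : ℝ => attrDist (S t '' G) A) atTop (𝓝 0)

/-- A global attractor in `V`: nonempty, compact, invariant, attracts all bounded subsets. -/
def IsGlobalAttrOn (V : Set X) (S : ℝ → X → X) (A : Set X) : Prop :=
  A.Nonempty ∧ A ⊆ V ∧ IsCompact A ∧ (∀ t : ℝ, 0 ≤ t → S t '' A = A) ∧
    AttractsSetOn V S A

/-- `B` is an absorbing set for the semigroup on `V`. -/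
def IsAbsorbingSetOn (V : Set X) (S : ℝ → X → X) (B : Set X) : Prop :=
  ∀ G : Set X, G ⊆ V → IsBounded G → ∃ tG : ℝ, 0 ≤ tG ∧ ∀ t : ℝ, tG ≤ t → S t '' G ⊆ B

/-- The semigroup on `V` is asymptotically closed. -/
def AsympClosedOn (V : Set X) (S : ℝ → X → X) : Prop :=
  ∀ t : ℝ, 0 ≤ t → ∀ tk : ℕ → ℝ, (∀ k, 0 ≤ tk k) → Tendsto tk atTop atTop →
    ∀ xk : ℕ → X, (∀ k, xk k ∈ V) → IsBounded (range xk) →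
      ∀ x y : X, x ∈ V → y ∈ V →
        Tendsto (fun k => S (tk k) (xk k)) atTop (𝓝 x) →
        Tendsto (fun k => S (t + tk k) (xk k)) atTop (𝓝 y) → S t x = y

/-- `M` attracts all bounded subsets of `V` at exponential rate `ξ`. -/
def ExpAttractsAtOn (V : Set X) (S : ℝ → X → X) (M : Set X) (ξ : ℝ) : Prop :=
  ∀ G : Set X, G ⊆ V → IsBounded G →
    Tendsto (fun t : ℝ => ENNReal.ofReal (Real.exp (ξ * t)) * attrDist (S t '' G) M)
      atTop (𝓝 0)

/-- A `T`-discrete exponential attractor for the semigroup on `V`. -/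
def IsDiscExpAttrOn (V : Set X) (S : ℝ → X → X) (T : ℝ) (M : Set X) : Prop :=
  M.Nonempty ∧ M ⊆ V ∧ IsCompact M ∧ S T '' M ⊆ M ∧ fracDim M ≠ ⊤ ∧
    ∃ ξ : ℝ, 0 < ξ ∧ ExpAttractsAtOn V S M ξ

end OnDefs

section Statement10

/-- `n` is a compact seminorm: every bounded sequence has an `n`-Cauchy subsequence. -/
def IsCompactSeminorm {Z : Type*} [NormedAddCommGroup Z] (n : Z → ℝ) : Prop :=
  ∀ zk : ℕ → Z, IsBounded (range zk) → ∃ φ : ℕ → ℕ, StrictMono φ ∧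
    ∀ δ : ℝ, 0 < δ → ∃ N : ℕ, ∀ j ≥ N, ∀ l ≥ N, n (zk (φ j) - zk (φ l)) < δ

/-
Quasi-stability is read off the decomposition `S(T) = C(T) + M(T)`: take `K = M(T)` in case (i) and
`K = κ • id` in case (ii). For the covering bound, the compact embedding makes the image `A` of the
unit ball totally bounded, so `A` has a finite maximal `σ/(2κ)`-separated subset `N`, which is also
a closed `σ/(2κ)`-net of `A`. Rescaling this net by `κ d`, quasi-stability splits every piece of `B`
of diameter `d` into at most `|N|` pieces whose images under `S(T)` have diameter at most
`(η + σ) d`. Iterating from `B` covers `S(kT)B` by `|N|^k` sets of diameter `≲ (η + σ)^k`, and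
`|N| ≤ m(B̄(0,1), σ/(2κ))` because `N` lifts to a separated subset of the unit ball.
-/

open scoped NNReal

section Covering

variable {W : Type*} [MetricSpace W]

def IsCoverOfDiam (𝒢 : Finset (Set W)) (A : Set W) (r : ℝ) : Prop :=
  A ⊆ ⋃₀ ↑𝒢 ∧ ∀ G ∈ 𝒢, G ⊆ A ∧ ∀ x ∈ G, ∀ y ∈ G, dist x y ≤ r

def IsSplittingOn (f : W → W) (B : Set W) (N : ℕ) (q : ℝ) : Prop :=
  ∀ d > 0, ∀ F ⊆ B, (∀ x ∈ F, ∀ y ∈ F, dist x y ≤ d) →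
    ∃ 𝒬 : Finset (Set W), 𝒬.card ≤ N ∧ IsCoverOfDiam 𝒬 (f '' F) (q * d)

lemma coverN_le_card_of_isCoverOfDiam {𝒢 : Finset (Set W)} {A : Set W} {r ε : ℝ}
    (h : IsCoverOfDiam 𝒢 A r) (hrε : r < ε) : coverN A ε ≤ 𝒢.card := by
  classical
  obtain ⟨hcov, h𝒢⟩ := h
  rcases A.eq_empty_or_nonempty with rfl | ⟨a₀, ha₀⟩
  · exact iInf₂_le_of_le ∅ (by simp) (iInf_le_of_le (by simp) (by simp))
  set c : Set W → W := fun G => if hG : G.Nonempty then hG.some else a₀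
  have hc : ∀ G : Set W, G.Nonempty → c G ∈ G := fun G hG => by simpa [c, hG] using hG.some_mem
  refine iInf₂_le_of_le (𝒢.image c) ?_ (iInf_le_of_le ?_ (by exact_mod_cast Finset.card_image_le))
  · intro x hx
    obtain ⟨G, hG, rfl⟩ := Finset.mem_image.1 hx
    by_cases hGne : G.Nonempty
    · exact (h𝒢 G hG).1 (hc G hGne)
    · simpa [c, hGne] using ha₀
  · intro x hx
    obtain ⟨G, hG, hxG⟩ := hcov hx
    refine mem_iUnion₂.2 ⟨c G, Finset.mem_image_of_mem c hG, ?_⟩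
    exact mem_ball.2 (((h𝒢 G hG).2 x hxG _ (hc G ⟨x, hxG⟩)).trans_lt hrε)

lemma IsCoverOfDiam.exists_image {f : W → W} {B : Set W} {N : ℕ} {q : ℝ}
    (hf : IsSplittingOn f B N q) {𝒢 : Finset (Set W)} {A : Set W} {r : ℝ}
    (h : IsCoverOfDiam 𝒢 A r) (hAB : A ⊆ B) (hr : 0 < r) :
    ∃ 𝒢' : Finset (Set W), 𝒢'.card ≤ 𝒢.card * N ∧ IsCoverOfDiam 𝒢' (f '' A) (q * r) := by
  classical
  obtain ⟨hcov, h𝒢⟩ := h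
  choose! 𝒬 h𝒬card h𝒬 using fun G (hG : G ∈ 𝒢) =>
    hf r hr G ((h𝒢 G hG).1.trans hAB) (h𝒢 G hG).2
  refine ⟨𝒢.biUnion 𝒬, Finset.card_biUnion_le_card_mul _ _ _ h𝒬card, ?_, ?_⟩
  · rintro _ ⟨x, hx, rfl⟩
    obtain ⟨G, hG, hxG⟩ := hcov hx
    obtain ⟨P, hP, hfx⟩ := (h𝒬 G hG).1 (mem_image_of_mem f hxG)
    exact ⟨P, Finset.mem_coe.2 (Finset.mem_biUnion.2 ⟨G, hG, hP⟩), hfx⟩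
  · intro P hP
    obtain ⟨G, hG, hP⟩ := Finset.mem_biUnion.1 hP
    obtain ⟨hPG, hPdiam⟩ := (h𝒬 G hG).2 P hP
    exact ⟨hPG.trans (image_mono (h𝒢 G hG).1), hPdiam⟩

theorem IsSplittingOn.coverN_iterate_image_le {f : W → W} {B : Set W} {N : ℕ} {q : ℝ}
    (hf : IsSplittingOn f B N q) (hB : IsBounded B) (hfB : MapsTo f B B) (hq : 0 < q) :
    ∃ a > 0, ∀ k : ℕ, coverN (f^[k] '' B) (a * q ^ k) ≤ (N : ℝ≥0∞) ^ k := by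
  obtain ⟨d, hd, hBd⟩ : ∃ d > 0, ∀ x ∈ B, ∀ y ∈ B, dist x y ≤ d := by
    obtain ⟨D, hD⟩ := isBounded_iff.1 hB
    exact ⟨max D 1, by positivity, fun x hx y hy => (hD hx hy).trans (le_max_left _ _)⟩
  have hcover : ∀ k : ℕ, ∃ 𝒢 : Finset (Set W),
      𝒢.card ≤ N ^ k ∧ IsCoverOfDiam 𝒢 (f^[k] '' B) (d * q ^ k) := by
    intro k
    induction k with
    | zero => exact ⟨{B}, by simp, by simpa [IsCoverOfDiam] using hBd⟩
    | succ k ih =>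
      obtain ⟨𝒢, hcard, h𝒢⟩ := ih
      obtain ⟨𝒢', hcard', h𝒢'⟩ :=
        h𝒢.exists_image hf (hfB.iterate k).image_subset (by positivity)
      refine ⟨𝒢', hcard'.trans ?_, ?_⟩
      · rw [pow_succ]; exact Nat.mul_le_mul_right N hcard
      · rwa [Function.iterate_succ', image_comp, pow_succ,
          show d * (q ^ k * q) = q * (d * q ^ k) by ring]
  refine ⟨2 * d, by positivity, fun k => ?_⟩
  obtain ⟨𝒢, hcard, h𝒢⟩ := hcover k
  have hdq : 0 < d * q ^ k := by positivity
  calc coverN (f^[k] '' B) (2 * d * q ^ k) ≤ 𝒢.card :=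
        coverN_le_card_of_isCoverOfDiam h𝒢 (by linarith)
    _ ≤ (N : ℝ≥0∞) ^ k := by exact_mod_cast hcard

end Covering

section Nets

variable {W : Type*} [PseudoMetricSpace W]

lemma exists_finset_isSeparated_isCover {A : Set W}
    (hA : TotallyBounded A) {ε : ℝ≥0} (hε : ε ≠ 0) :
    ∃ N : Finset W, ↑N ⊆ A ∧ IsSeparated ε (N : Set W) ∧ IsCover ε A N := by
  have hpack : packingNumber ε A ≠ ⊤ := by
    obtain ⟨C, -, hC, hcov⟩ :=
      exists_finite_isCover_of_totallyBounded (ε := ε / 2) (by simpa using hε) hA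
    have := (packingNumber_two_mul_le_externalCoveringNumber (ε / 2) A).trans
      hcov.externalCoveringNumber_le_encard
    rw [mul_div_cancel₀ ε two_ne_zero] at this
    exact ne_top_of_le_ne_top (encard_ne_top_iff.2 hC) this
  have hfin : (maximalSeparatedSet ε A).Finite :=
    encard_ne_top_iff.1 (by rwa [encard_maximalSeparatedSet hpack])
  exact ⟨hfin.toFinset, by simpa using maximalSeparatedSet_subset,
    by simpa using isSeparated_maximalSeparatedSet,
    by simpa using isCover_maximalSeparatedSet hpack⟩

lemma card_le_maxDisting_of_isSeparated {α : Type*} (g : α → W)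
    {s : Set α} {N : Finset W} (hNs : ↑N ⊆ g '' s) {ε : ℝ≥0} (hN : IsSeparated ε (N : Set W)) :
    (N.card : ℝ≥0∞) ≤ maxDisting (fun a b => dist (g a) (g b)) s ε := by
  classical
  rcases N.eq_empty_or_nonempty with rfl | ⟨w, hw⟩
  · simp
  have : Nonempty α := let ⟨a, _⟩ := hNs hw; ⟨a⟩
  set c := Function.invFunOn g s
  have hc : ∀ w ∈ N, c w ∈ s ∧ g (c w) = w :=
    fun w hw => ⟨Function.invFunOn_mem (hNs hw), Function.invFunOn_eq (hNs hw)⟩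
  have hinj : InjOn c N := fun w hw w' hw' h => by rw [← (hc w hw).2, ← (hc w' hw').2, h]
  refine le_iSup₂_of_le (N.image c) ?_ (le_iSup_of_le ?_ ?_)
  · intro a ha
    obtain ⟨w, hw, rfl⟩ := Finset.mem_image.1 ha
    exact (hc w hw).1
  · intro a ha b hb hab
    obtain ⟨w, hw, rfl⟩ := Finset.mem_image.1 ha
    obtain ⟨w', hw', rfl⟩ := Finset.mem_image.1 hb
    have hsep : (ε : ℝ≥0∞) < edist w w' := hN hw hw' fun h => hab (h ▸ rfl)
    rw [edist_dist, ENNReal.coe_lt_ofReal] at hsep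
    change (ε : ℝ) ≤ dist (g (c w)) (g (c w'))
    rw [(hc w hw).2, (hc w' hw').2]
    exact hsep.le
  · rw [Finset.card_image_of_injOn hinj]

end Nets

section QuasiStability

variable {X E W : Type*} [NormedAddCommGroup X] [NormedAddCommGroup E] [NormedSpace ℝ E]
  [NormedAddCommGroup W] [NormedSpace ℝ W]

lemma isCompactSeminorm_norm_comp (e : E →L[ℝ] W)
    (he : ∀ s : Set E, IsBounded s → IsCompact (closure (e '' s))) :
    IsCompactSeminorm (fun z : E => ‖e z‖) := by
  intro zk hzk
  obtain ⟨w, -, φ, hφ, hlim⟩ := (he _ hzk).tendsto_subseq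
    (x := fun n => e (zk n)) fun n => subset_closure ⟨zk n, mem_range_self n, rfl⟩
  refine ⟨φ, hφ, fun δ hδ => ?_⟩
  obtain ⟨N, hN⟩ := Metric.cauchySeq_iff.mp hlim.cauchySeq δ hδ
  exact ⟨N, fun j hj l hl => by simpa [dist_eq_norm] using hN j hj l hl⟩

/-- Quasi-stability with respect to the compact seminorm `z ↦ ‖e z‖` on `E`. -/
def IsQuasiStableOn (f : X → X) (B : Set X) (e : E →L[ℝ] W) (η κ : ℝ) : Prop :=
  ∃ K : X → E, (∀ x ∈ B, ∀ y ∈ B, ‖K x - K y‖ ≤ κ * ‖x - y‖) ∧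
    ∀ x ∈ B, ∀ y ∈ B, ‖f x - f y‖ ≤ η * ‖x - y‖ + ‖e (K x) - e (K y)‖

lemma isQuasiStableOn_of_eq_add_comp [NormedSpace ℝ X] {f C : X → X} {M : X → E} {B : Set X}
    {e : E →L[ℝ] X} {η κ : ℝ} (hf : ∀ x ∈ B, f x = C x + e (M x))
    (hC : ∀ x ∈ B, ∀ y ∈ B, ‖C x - C y‖ ≤ η * ‖x - y‖)
    (hM : ∀ x ∈ B, ∀ y ∈ B, ‖M x - M y‖ ≤ κ * ‖x - y‖) : IsQuasiStableOn f B e η κ := by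
  refine ⟨M, hM, fun x hx y hy => ?_⟩
  rw [hf x hx, hf y hy, add_sub_add_comm]
  exact (norm_add_le _ _).trans (add_le_add_left (hC x hx y hy) _)

lemma isQuasiStableOn_of_eq_add [NormedSpace ℝ X] {f C M : X → X} {B : Set X} {e : X →L[ℝ] W}
    {η κ : ℝ} (hκ : 0 ≤ κ) (hf : ∀ x ∈ B, f x = C x + M x)
    (hC : ∀ x ∈ B, ∀ y ∈ B, ‖C x - C y‖ ≤ η * ‖x - y‖)
    (hM : ∀ x ∈ B, ∀ y ∈ B, ‖M x - M y‖ ≤ κ * ‖e x - e y‖) : IsQuasiStableOn f B e η κ := by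
  refine ⟨fun x => κ • x, fun x _ y _ => ?_, fun x hx y hy => ?_⟩
  · rw [← smul_sub, norm_smul, Real.norm_of_nonneg hκ]
  · rw [hf x hx, hf y hy, add_sub_add_comm, map_smul, map_smul, ← smul_sub, norm_smul,
      Real.norm_of_nonneg hκ]
    exact (norm_add_le _ _).trans (add_le_add (hC x hx y hy) (hM x hx y hy))

lemma exists_finset_cover_of_isCover_image_closedBall {α : Type*} {e : E →L[ℝ] W} {ε : ℝ≥0}
    {N : Finset W} (hN : IsCover ε (e '' closedBall 0 1) (N : Set W)) (g : α → E) (c : E)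
    {r : ℝ} (hr : 0 < r) {F : Set α} (hF : ∀ y ∈ F, ‖g y - c‖ ≤ r) :
    ∃ 𝒬 : Finset (Set α), 𝒬.card ≤ N.card ∧ F ⊆ ⋃₀ ↑𝒬 ∧
      ∀ P ∈ 𝒬, P ⊆ F ∧ ∀ y ∈ P, ∀ y' ∈ P, ‖e (g y) - e (g y')‖ ≤ 2 * ε * r := by
  classical
  set z : α → E := fun y => r⁻¹ • (g y - c)
  refine ⟨N.image fun n => {y ∈ F | dist (e (z y)) n ≤ ε}, Finset.card_image_le, ?_, ?_⟩
  · intro y hy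
    have hz : z y ∈ closedBall (0 : E) 1 := by
      rw [mem_closedBall_zero_iff, norm_smul, norm_inv, Real.norm_of_nonneg hr.le]
      exact inv_mul_le_one_of_le₀ (hF y hy) hr.le
    obtain ⟨n, hn, hyn⟩ := mem_iUnion₂.1 (hN.subset_iUnion_closedBall (mem_image_of_mem e hz))
    exact ⟨_, Finset.mem_image_of_mem _ hn, hy, hyn⟩
  · simp only [Finset.mem_image]
    rintro _ ⟨n, -, rfl⟩
    refine ⟨sep_subset _ _, fun y ⟨_, hy⟩ y' ⟨_, hy'⟩ => ?_⟩
    have hscale : e (g y) - e (g y') = r • (e (z y) - e (z y')) := by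
      rw [← map_sub, ← map_sub, ← map_smul]
      simp only [z, ← smul_sub, sub_sub_sub_cancel_right, smul_smul, mul_inv_cancel₀ hr.ne',
        one_smul]
    calc ‖e (g y) - e (g y')‖ = r * dist (e (z y)) (e (z y')) := by
          rw [hscale, norm_smul, Real.norm_of_nonneg hr.le, dist_eq_norm]
      _ ≤ r * (ε + ε) := by gcongr; exact (dist_triangle_right _ _ n).trans (add_le_add hy hy')
      _ = 2 * ε * r := by ring

lemma IsQuasiStableOn.isSplittingOn {f : X → X} {B : Set X} {e : E →L[ℝ] W} {η κ : ℝ}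
    (hf : IsQuasiStableOn f B e η κ) (hη : 0 ≤ η) (hκ : 0 < κ) {ε : ℝ≥0} {N : Finset W}
    (hN : IsCover ε (e '' closedBall 0 1) (N : Set W)) :
    IsSplittingOn f B N.card (η + 2 * κ * ε) := by
  classical
  intro d hd F hFB hFd
  obtain ⟨K, hK, hfK⟩ := hf
  rcases F.eq_empty_or_nonempty with rfl | ⟨x₀, hx₀⟩
  · exact ⟨∅, by simp, by simp [IsCoverOfDiam]⟩
  have hKF : ∀ x ∈ F, ‖K x - K x₀‖ ≤ κ * d := fun x hx =>
    (hK x (hFB hx) x₀ (hFB hx₀)).trans (by rw [← dist_eq_norm]; gcongr; exact hFd x hx x₀ hx₀)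
  obtain ⟨𝒬, hcard, hcover, h𝒬⟩ :=
    exists_finset_cover_of_isCover_image_closedBall hN K (K x₀) (mul_pos hκ hd) hKF
  refine ⟨𝒬.image (f '' ·), Finset.card_image_le.trans hcard, ?_, ?_⟩
  · rintro _ ⟨x, hx, rfl⟩
    obtain ⟨P, hP, hxP⟩ := hcover hx
    exact ⟨f '' P, Finset.mem_coe.2 (Finset.mem_image_of_mem _ hP), mem_image_of_mem f hxP⟩
  · simp only [Finset.mem_image]
    rintro _ ⟨P, hP, rfl⟩
    obtain ⟨hPF, hPdiam⟩ := h𝒬 P hP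
    refine ⟨image_mono hPF, ?_⟩
    rintro _ ⟨x, hx, rfl⟩ _ ⟨y, hy, rfl⟩
    calc dist (f x) (f y) ≤ η * ‖x - y‖ + ‖e (K x) - e (K y)‖ := by
          rw [dist_eq_norm]; exact hfK x (hFB (hPF hx)) y (hFB (hPF hy))
      _ ≤ η * d + 2 * ε * (κ * d) := by
          rw [← dist_eq_norm]; gcongr
          · exact hFd x (hPF hx) y (hPF hy)
          · exact hPdiam x hx y hy
      _ = (η + 2 * κ * ε) * d := by ring

theorem IsQuasiStableOn.coverN_iterate_image_le {f : X → X} {B : Set X} {e : E →L[ℝ] W}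
    {η κ : ℝ} (hf : IsQuasiStableOn f B e η κ) (he : IsCompact (closure (e '' closedBall 0 1)))
    (hB : IsBounded B) (hfB : MapsTo f B B) (hη : 0 ≤ η) (hκ : 0 < κ) {σ : ℝ} (hσ : 0 < σ) :
    ∃ a > 0, ∀ k : ℕ, coverN (f^[k] '' B) (a * (η + σ) ^ k) ≤
      maxDisting (fun z w : E => ‖e z - e w‖) (closedBall 0 1) (σ / (2 * κ)) ^ k := by
  set ε : ℝ≥0 := ⟨σ / (2 * κ), by positivity⟩
  have hε : (ε : ℝ) = σ / (2 * κ) := rfl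
  have hε0 : ε ≠ 0 := by rw [ne_eq, ← NNReal.coe_eq_zero, hε]; positivity
  obtain ⟨N, hNA, hNsep, hNcov⟩ :=
    exists_finset_isSeparated_isCover (he.totallyBounded.subset subset_closure) hε0
  have hsplit := hf.isSplittingOn hη hκ hNcov
  rw [hε, show η + 2 * κ * (σ / (2 * κ)) = η + σ by field_simp] at hsplit
  obtain ⟨a, ha, hcov⟩ := hsplit.coverN_iterate_image_le hB hfB (by linarith)
  refine ⟨a, ha, fun k => (hcov k).trans (pow_le_pow_left' ?_ k)⟩
  simpa only [dist_eq_norm, hε] using card_le_maxDisting_of_isSeparated e hNA hNsep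

end QuasiStability

lemma IsSemiflowOn.apply_natCast_mul {X : Type*} [NormedAddCommGroup X] {V : Set X}
    {S : ℝ → X → X} (hS : IsSemiflowOn V S) {T : ℝ} (hT : 0 ≤ T) {x : X} (hx : x ∈ V) (k : ℕ) :
    S (k * T) x = (S T)^[k] x := by
  induction k with
  | zero => simpa using hS.1 x hx
  | succ k ih =>
    rw [Function.iterate_succ_apply', ← ih, hS.2.2 T _ hT (by positivity) x hx]
    push_cast
    ring_nf

variable {X : Type*} [NormedAddCommGroup X] [NormedSpace ℝ X]
  {Y Z : Type*} [NormedAddCommGroup Y] [NormedSpace ℝ Y]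
  [NormedAddCommGroup Z] [NormedSpace ℝ Z]

theorem smoothing_implies_quasi_stability_and_covering_general
    (V : Set X)
    (S : ℝ → X → X) (hS : IsSemiflowOn V S) (T : ℝ) (hT : 0 < T)
    (B : Set X) (hBV : B ⊆ V) (hBbdd : IsBounded B)
    (η κ : ℝ) (hη0 : 0 ≤ η) (hκ : 0 < κ)
    -- compact embeddings: `ι : Z → X` (case (i)) and `jι : X → Y` (case (ii))
    (ι : Z →L[ℝ] X)
    (hι_cpt : ∀ s : Set Z, IsBounded s → IsCompact (closure (ι '' s)))
    (jι : X →L[ℝ] Y)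
    (hjι_cpt : ∀ s : Set X, IsBounded s → IsCompact (closure (jι '' s))) :
    -- Case (i): `S(T) = C(T) + M(T)` with `M(T) : B → Z`, `Z` compactly embedded in `X`
    (∀ (C : X → X) (M : X → Z),
      (∀ x ∈ B, S T x = C x + ι (M x)) →
      (∀ x ∈ B, ∀ y ∈ B, ‖C x - C y‖ ≤ η * ‖x - y‖) →
      (∀ x ∈ B, ∀ y ∈ B, ‖M x - M y‖ ≤ κ * ‖x - y‖) →
      -- quasi-stability on `B` at time `T` with parameters `(η,κ)` w.r.t. `z ↦ ‖z‖_X` on `Z`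
      (IsCompactSeminorm (fun z : Z => ‖ι z‖) ∧
        ∃ K : X → Z, (∀ x ∈ B, ∀ y ∈ B, ‖K x - K y‖ ≤ κ * ‖x - y‖) ∧
          (∀ x ∈ B, ∀ y ∈ B, ‖S T x - S T y‖ ≤ η * ‖x - y‖ + ‖ι (K x) - ι (K y)‖)) ∧
      -- covering condition
      (S T '' B ⊆ B → ∀ σ : ℝ, 0 < σ → σ < 1 - η →
        ∃ (k₀ : ℕ) (a b : ℝ), 0 < a ∧ 0 < b ∧ ∀ k : ℕ, k₀ ≤ k →
          coverN (S (k * T) '' B) (a * (η + σ) ^ k) ≤ ENNReal.ofReal b *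
            (maxDisting (fun z w : Z => ‖ι z - ι w‖) (closedBall (0 : Z) 1)
              (σ / (2 * κ))) ^ k)) ∧
    -- Case (ii): `S(T) = C(T) + M(T)` with `X` compactly embedded in `Y`
    (∀ (C M : X → X),
      (∀ x ∈ B, S T x = C x + M x) →
      (∀ x ∈ B, ∀ y ∈ B, ‖C x - C y‖ ≤ η * ‖x - y‖) →
      (∀ x ∈ B, ∀ y ∈ B, ‖M x - M y‖ ≤ κ * ‖jι x - jι y‖) →
      -- quasi-stability on `B` at time `T` with parameters `(η,κ)` w.r.t. `x ↦ ‖x‖_Y` on `X`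
      (IsCompactSeminorm (fun x : X => ‖jι x‖) ∧
        ∃ K : X → X, (∀ x ∈ B, ∀ y ∈ B, ‖K x - K y‖ ≤ κ * ‖x - y‖) ∧
          (∀ x ∈ B, ∀ y ∈ B, ‖S T x - S T y‖ ≤ η * ‖x - y‖ + ‖jι (K x) - jι (K y)‖)) ∧
      -- covering condition
      (S T '' B ⊆ B → ∀ σ : ℝ, 0 < σ → σ < 1 - η →
        ∃ (k₀ : ℕ) (a b : ℝ), 0 < a ∧ 0 < b ∧ ∀ k : ℕ, k₀ ≤ k →
          coverN (S (k * T) '' B) (a * (η + σ) ^ k) ≤ ENNReal.ofReal b *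
            (maxDisting (fun x w : X => ‖jι x - jι w‖) (closedBall (0 : X) 1)
              (σ / (2 * κ))) ^ k)) := by
  have hiter : ∀ k : ℕ, S (k * T) '' B = (S T)^[k] '' B := fun k =>
    image_congr fun x hx => hS.apply_natCast_mul hT.le (hBV hx) k
  refine ⟨fun C M hdecomp hC hM => ?_, fun C M hdecomp hC hM => ?_⟩
  · have hqs := isQuasiStableOn_of_eq_add_comp hdecomp hC hM
    refine ⟨⟨isCompactSeminorm_norm_comp ι hι_cpt, hqs⟩, fun hinv σ hσ _ => ?_⟩
    obtain ⟨a, ha, hcov⟩ := hqs.coverN_iterate_image_le (hι_cpt _ isBounded_closedBall) hBbdd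
      (mapsTo_iff_image_subset.2 hinv) hη0 hκ hσ
    refine ⟨0, a, 1, ha, one_pos, fun k _ => ?_⟩
    rw [hiter, ENNReal.ofReal_one, one_mul]
    exact hcov k
  · have hqs := isQuasiStableOn_of_eq_add hκ.le hdecomp hC hM
    refine ⟨⟨isCompactSeminorm_norm_comp jι hjι_cpt, hqs⟩, fun hinv σ hσ _ => ?_⟩
    obtain ⟨a, ha, hcov⟩ := hqs.coverN_iterate_image_le (hjι_cpt _ isBounded_closedBall) hBbdd
      (mapsTo_iff_image_subset.2 hinv) hη0 hκ hσ
    refine ⟨0, a, 1, ha, one_pos, fun k _ => ?_⟩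
    rw [hiter, ENNReal.ofReal_one, one_mul]
    exact hcov k

theorem smoothing_implies_quasi_stability_and_covering
    (V : Set X) (hV : V.Nonempty)
    (S : ℝ → X → X) (hS : IsSemiflowOn V S) (T : ℝ) (hT : 0 < T)
    (B : Set X) (hBV : B ⊆ V) (hBbdd : IsBounded B)
    (η κ : ℝ) (hη0 : 0 ≤ η) (hη1 : η < 1) (hκ : 0 < κ)
    -- compact embeddings: `ι : Z → X` (case (i)) and `jι : X → Y` (case (ii))
    (ι : Z →L[ℝ] X) (hι_inj : Function.Injective ι)
    (hι_cpt : ∀ s : Set Z, IsBounded s → IsCompact (closure (ι '' s)))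
    (jι : X →L[ℝ] Y) (hjι_inj : Function.Injective jι)
    (hjι_cpt : ∀ s : Set X, IsBounded s → IsCompact (closure (jι '' s))) :
    -- Case (i): `S(T) = C(T) + M(T)` with `M(T) : B → Z`, `Z` compactly embedded in `X`
    (∀ (C : X → X) (M : X → Z),
      (∀ x ∈ B, S T x = C x + ι (M x)) →
      (∀ x ∈ B, ∀ y ∈ B, ‖C x - C y‖ ≤ η * ‖x - y‖) →
      (∀ x ∈ B, ∀ y ∈ B, ‖M x - M y‖ ≤ κ * ‖x - y‖) →
      -- quasi-stability on `B` at time `T` with parameters `(η,κ)` w.r.t. `z ↦ ‖z‖_X` on `Z`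
      (IsCompactSeminorm (fun z : Z => ‖ι z‖) ∧
        ∃ K : X → Z, (∀ x ∈ B, ∀ y ∈ B, ‖K x - K y‖ ≤ κ * ‖x - y‖) ∧
          (∀ x ∈ B, ∀ y ∈ B, ‖S T x - S T y‖ ≤ η * ‖x - y‖ + ‖ι (K x) - ι (K y)‖)) ∧
      -- covering condition
      (S T '' B ⊆ B → ∀ σ : ℝ, 0 < σ → σ < 1 - η →
        ∃ (k₀ : ℕ) (a b : ℝ), 0 < a ∧ 0 < b ∧ ∀ k : ℕ, k₀ ≤ k →
          coverN (S (k * T) '' B) (a * (η + σ) ^ k) ≤ ENNReal.ofReal b *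
            (maxDisting (fun z w : Z => ‖ι z - ι w‖) (closedBall (0 : Z) 1)
              (σ / (2 * κ))) ^ k)) ∧
    -- Case (ii): `S(T) = C(T) + M(T)` with `X` compactly embedded in `Y`
    (∀ (C M : X → X),
      (∀ x ∈ B, S T x = C x + M x) →
      (∀ x ∈ B, ∀ y ∈ B, ‖C x - C y‖ ≤ η * ‖x - y‖) →
      (∀ x ∈ B, ∀ y ∈ B, ‖M x - M y‖ ≤ κ * ‖jι x - jι y‖) →
      -- quasi-stability on `B` at time `T` with parameters `(η,κ)` w.r.t. `x ↦ ‖x‖_Y` on `X`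
      (IsCompactSeminorm (fun x : X => ‖jι x‖) ∧
        ∃ K : X → X, (∀ x ∈ B, ∀ y ∈ B, ‖K x - K y‖ ≤ κ * ‖x - y‖) ∧
          (∀ x ∈ B, ∀ y ∈ B, ‖S T x - S T y‖ ≤ η * ‖x - y‖ + ‖jι (K x) - jι (K y)‖)) ∧
      -- covering condition
      (S T '' B ⊆ B → ∀ σ : ℝ, 0 < σ → σ < 1 - η →
        ∃ (k₀ : ℕ) (a b : ℝ), 0 < a ∧ 0 < b ∧ ∀ k : ℕ, k₀ ≤ k →
          coverN (S (k * T) '' B) (a * (η + σ) ^ k) ≤ ENNReal.ofReal b *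
            (maxDisting (fun x w : X => ‖jι x - jι w‖) (closedBall (0 : X) 1)
              (σ / (2 * κ))) ^ k)) :=
  smoothing_implies_quasi_stability_and_covering_general V S hS T hT B hBV hBbdd η κ hη0 hκ ι hι_cpt
    jι hjι_cpt

end Statement10
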